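/- Let f ∈ 𝔽 and let (X, Y) be a pair of random variables on a common probability space. Then: (i) S_f(X,Y) = S_f(Y,X); (ii) S_f(X,Y) ≥ 0, and S_f(X,Y) = 0 whenever X and Y are independent; (iii) if f is strictly convex at 1, then S_f(X,Y) = 0 implies that X and Y are independent. -/

import Mathlib

open MeasureTheory ProbabilityTheory Filter Set Topology
open scoped ENNReal NNReal

noncomputable section

/-- Extended-real positive part, as a value in `ℝ≥0∞`. -/
def EReal.toENNReal' (x : EReal) : ℝ≥0∞ :=
  if x = ⊤ then ⊤ else ENNReal.ofReal x.toReal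

/-- Quasi-integrability of an extended-real-valued function: the positive part or the negative
part has finite integral. -/
def QuasiIntegrable {Ω : Type*} [MeasurableSpace Ω] (μ : Measure Ω) (g : Ω → EReal) : Prop :=
  (∫⁻ ω, (g ω).toENNReal' ∂μ) < ⊤ ∨ (∫⁻ ω, (-(g ω)).toENNReal' ∂μ) < ⊤

/-- The integral of an extended-real-valued function, defined as the difference of the
integrals of the positive and negative parts. -/
def eInt {Ω : Type*} [MeasurableSpace Ω] (μ : Measure Ω) (g : Ω → EReal) : EReal :=
  ((∫⁻ ω, (g ω).toENNReal' ∂μ : ℝ≥0∞) : EReal) - ((∫⁻ ω, (-(g ω)).toENNReal' ∂μ : ℝ≥0∞) : EReal)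

/-- `f` is strictly convex at the point `z`. -/
def StrictConvexAt (f : ℝ → EReal) (z : ℝ) : Prop :=
  ∀ x y α : ℝ, x ≠ z → y ≠ z → 0 < α → α < 1 → z = α * x + (1 - α) * y →
    f z < (α : EReal) * f x + ((1 - α : ℝ) : EReal) * f y

/-- The class `𝔽` of proper convex functions `f : ℝ → (-∞, +∞]` with domain contained in
`[0, ∞)`, right-continuous at `0`, with `f 1 = 0` and `1` in the interior of the domain. -/
structure MemF (f : ℝ → EReal) : Prop where
  ne_bot : ∀ x, f x ≠ ⊥
  convex : ∀ x y α : ℝ, 0 ≤ α → α ≤ 1 →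
    f (α * x + (1 - α) * y) ≤ (α : EReal) * f x + ((1 - α : ℝ) : EReal) * f y
  top_of_neg : ∀ x : ℝ, x < 0 → f x = ⊤
  right_continuous_at_zero : Tendsto f (nhdsWithin 0 (Set.Ioi 0)) (nhds (f 0))
  one_eq_zero : f 1 = 0
  one_mem_interior_dom : ∃ ε : ℝ, 0 < ε ∧ ∀ x : ℝ, |x - 1| < ε → f x ≠ ⊤

/-- The value `f*(0) = lim_{t → ∞} f(t)/t` of the convex conjugate at `0`. -/
def fStarZero (f : ℝ → EReal) : EReal :=
  Filter.limsup (fun t : ℝ => ((t⁻¹ : ℝ) : EReal) * f t) Filter.atTop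

/-- The convex conjugate `f*` of `f ∈ 𝔽`: `f*(t) = t f(1/t)` for `t > 0`,
`f*(0) = lim_{t→∞} f(t)/t`, and `f* = ⊤` on negative reals. -/
def fConj (f : ℝ → EReal) : ℝ → EReal := fun t =>
  if 0 < t then ((t : ℝ) : EReal) * f t⁻¹
  else if t = 0 then fStarZero f
  else ⊤

/-- The ratio `dP/dQ` defined `(P+Q)`-a.e. via densities w.r.t. `λ = P + Q`, with the
conventions `0/0 = ∞/∞ = 0` (which are those of `ℝ≥0∞` division). -/
def rnRatio {Ω : Type*} [MeasurableSpace Ω] (P Q : Measure Ω) : Ω → ℝ≥0∞ :=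
  fun ω => P.rnDeriv (P + Q) ω / Q.rnDeriv (P + Q) ω

/-- Extension of `f : ℝ → EReal` to `[0, ∞]`, with value `⊤` at `∞`. -/
def extF (f : ℝ → EReal) : ℝ≥0∞ → EReal :=
  fun x => if x = ⊤ then ⊤ else f x.toReal

/-- The `f`-divergence `D_f(P‖Q) = ∫ f(dP/dQ) dQ + f*(0) P(dP/dQ = ∞)`.
Note that `Q(dP/dQ = ∞) = 0`, and that in `EReal` one has `f*(0) · 0 = 0`, which encodes the
convention that the second term vanishes when `P(dP/dQ = ∞) = 0`. -/
def fDiv {Ω : Type*} [MeasurableSpace Ω] (f : ℝ → EReal) (P Q : Measure Ω) : EReal :=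
  eInt Q (fun ω => extF f (rnRatio P Q ω)) +
    fStarZero f * ((P {ω | rnRatio P Q ω = ⊤} : ℝ≥0∞) : EReal)

/-- The Csiszár index `S_f(X,Y) = D_f(P_X ⊗ P_Y ‖ P_{(X,Y)})`. -/
def csiszarIndex {Ω α β : Type*} [MeasurableSpace Ω] [MeasurableSpace α] [MeasurableSpace β]
    (f : ℝ → EReal) (μ : Measure Ω) (X : Ω → α) (Y : Ω → β) : EReal :=
  fDiv f ((μ.map X).prod (μ.map Y)) (μ.map (fun ω => (X ω, Y ω)))

section CsiszarAux

open EReal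

/-! ### Elementary `toENNReal'` lemmas -/

lemma toENNReal'_coe (x : ℝ) : ((x : ℝ) : EReal).toENNReal' = ENNReal.ofReal x := by
  simp [EReal.toENNReal']

lemma toENNReal'_top : (⊤ : EReal).toENNReal' = ⊤ := by simp [EReal.toENNReal']

lemma toENNReal'_mono {x y : EReal} (h : x ≤ y) : x.toENNReal' ≤ y.toENNReal' := by
  rcases eq_or_ne y ⊤ with hy | hy
  · simp [hy, EReal.toENNReal']
  · have hx : x ≠ ⊤ := fun hx => hy (top_le_iff.mp (hx ▸ h))
    rcases eq_or_ne x ⊥ with hb | hb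
    · simp [hb, EReal.toENNReal', EReal.toReal_bot]
    · simp only [EReal.toENNReal', hx, hy, if_false]
      exact ENNReal.ofReal_le_ofReal (EReal.toReal_le_toReal h hb hy)

lemma toENNReal'_nonpos {x : EReal} (h : x ≤ 0) : x.toENNReal' = 0 := by
  have hx : x ≠ ⊤ := fun hx => by simp [hx] at h
  rcases eq_or_ne x ⊥ with hb | hb
  · simp [hb, EReal.toENNReal', EReal.toReal_bot]
  · simp only [EReal.toENNReal', hx, if_false]
    refine ENNReal.ofReal_eq_zero.mpr ?_
    have := EReal.toReal_le_toReal h hb (by simp : (0:EReal) ≠ ⊤)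
    simpa using this

lemma toENNReal'_eq_zero_iff {x : EReal} : x.toENNReal' = 0 ↔ x ≤ 0 := by
  constructor
  · intro h
    rcases eq_or_ne x ⊤ with hx | hx
    · simp [hx, EReal.toENNReal'] at h
    · rcases eq_or_ne x ⊥ with hb | hb
      · simp [hb]
      · simp only [EReal.toENNReal', hx, if_false, ENNReal.ofReal_eq_zero] at h
        have := EReal.coe_toReal hx hb
        rw [← this]
        exact_mod_cast h
  · exact toENNReal'_nonpos

lemma ennreal_coe_ereal_eq {a : ℝ≥0∞} (h : a ≠ ⊤) : (a : EReal) = ((a.toReal : ℝ) : EReal) := by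
  rw [← ENNReal.ofReal_toReal h, EReal.coe_ennreal_ofReal, max_eq_left ENNReal.toReal_nonneg,
    ENNReal.toReal_ofReal ENNReal.toReal_nonneg]

/-! ### Convexity helpers -/

variable {f : ℝ → EReal}

lemma MemF.measurable (hf : MemF f) : Measurable f := by
  apply measurable_of_Iic
  intro t
  induction t with
  | bot =>
    have : f ⁻¹' Set.Iic ⊥ = ∅ := by
      ext x; simp [le_bot_iff, hf.ne_bot x]
    rw [this]; exact MeasurableSet.empty
  | top => simp
  | coe r =>
    refine Set.OrdConnected.measurableSet ⟨fun x hx y hy z hz => ?_⟩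
    simp only [Set.mem_preimage, Set.mem_Iic] at *
    rcases eq_or_lt_of_le hz.1 with rfl | hxz
    · exact hx
    have hxy : x < y := lt_of_lt_of_le hxz hz.2
    set α : ℝ := (y - z) / (y - x) with hα
    have hyx : (0:ℝ) < y - x := by linarith
    have hα0 : 0 ≤ α := div_nonneg (by linarith [hz.2]) hyx.le
    have hα1 : α ≤ 1 := by
      rw [div_le_one hyx]; linarith
    have hzc : z = α * x + (1 - α) * y := by
      rw [hα]; field_simp
      ring
    calc f z = f (α * x + (1 - α) * y) := by rw [← hzc]
    _ ≤ (α : EReal) * f x + ((1 - α : ℝ) : EReal) * f y := hf.convex x y α hα0 hα1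
    _ ≤ (α : EReal) * r + ((1 - α : ℝ) : EReal) * r :=
        add_le_add (mul_le_mul_of_nonneg_left hx (EReal.coe_nonneg.mpr hα0))
          (mul_le_mul_of_nonneg_left hy (EReal.coe_nonneg.mpr (by linarith)))
    _ = ((α * r + (1 - α) * r : ℝ) : EReal) := by
        rw [EReal.coe_add, EReal.coe_mul, EReal.coe_mul]
    _ = (r : EReal) := by norm_num [← EReal.coe_add]; ring_nf

end CsiszarAux
section Subgradient

open EReal

variable {f : ℝ → EReal}

/-- Real-valued convexity inequality for points where `f` is finite. -/
lemma MemF.convex_real (hf : MemF f) {x y α : ℝ} (hα0 : 0 ≤ α) (hα1 : α ≤ 1)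
    (hx : f x ≠ ⊤) (hy : f y ≠ ⊤) :
    f (α * x + (1 - α) * y) ≠ ⊤ ∧
      (f (α * x + (1 - α) * y)).toReal ≤ α * (f x).toReal + (1 - α) * (f y).toReal := by
  have hxe : f x = ((f x).toReal : EReal) := (EReal.coe_toReal hx (hf.ne_bot x)).symm
  have hye : f y = ((f y).toReal : EReal) := (EReal.coe_toReal hy (hf.ne_bot y)).symm
  have h := hf.convex x y α hα0 hα1
  rw [hxe, hye] at h
  have h2 : f (α * x + (1 - α) * y) ≤ ((α * (f x).toReal + (1 - α) * (f y).toReal : ℝ) : EReal) := by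
    rw [EReal.coe_add, EReal.coe_mul, EReal.coe_mul]; exact h
  have hne : f (α * x + (1 - α) * y) ≠ ⊤ := by
    intro hT; rw [hT] at h2; exact (EReal.coe_lt_top _).not_ge h2
  refine ⟨hne, ?_⟩
  have := EReal.toReal_le_toReal h2 (hf.ne_bot _) (EReal.coe_ne_top _)
  rwa [EReal.toReal_coe] at this

lemma MemF.toReal_one (hf : MemF f) : (f 1).toReal = 0 := by rw [hf.one_eq_zero]; rfl

/-- Existence of a subgradient of `f` at `1`: a real `c` with `c (x - 1) ≤ f x` for all `x`. -/
lemma MemF.exists_subgradient (hf : MemF f) :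
    ∃ c : ℝ, ∀ x : ℝ, ((c * (x - 1) : ℝ) : EReal) ≤ f x := by
  obtain ⟨ε, hε, hdom⟩ := hf.one_mem_interior_dom
  set δ : ℝ := min ε 1 / 2 with hδdef
  have hδ0 : 0 < δ := by positivity
  have hδε : δ < ε := by
    have : min ε 1 ≤ ε := min_le_left _ _
    simp only [hδdef]; linarith
  have hfin : ∀ h : ℝ, |h| ≤ δ → f (1 + h) ≠ ⊤ := by
    intro h hh
    apply hdom
    rw [show 1 + h - 1 = h by ring]
    exact lt_of_le_of_lt hh hδε
  set S : Set ℝ := (fun h => (f (1 + h)).toReal / h) '' Set.Ioo 0 δ with hS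
  have hSne : S.Nonempty := ⟨_, ⟨δ / 2, ⟨by positivity, by linarith⟩, rfl⟩⟩
  -- the left difference quotient at `1` with step `δ` bounds `S` from below
  set b : ℝ := -((f (1 - δ)).toReal / δ) with hb
  have hSbd : ∀ s ∈ S, b ≤ s := by
    rintro s ⟨h, ⟨hh0, hhδ⟩, rfl⟩
    show b ≤ (f (1 + h)).toReal / h
    -- convexity between `1 - δ` and `1 + h` at `1`
    have hαpos : (0:ℝ) < h + δ := by linarith
    set α : ℝ := h / (h + δ) with hα
    have hα0 : 0 ≤ α := div_nonneg hh0.le hαpos.le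
    have hα1 : α ≤ 1 := by rw [div_le_one hαpos]; linarith
    have hcomb : α * (1 - δ) + (1 - α) * (1 + h) = 1 := by
      rw [hα]; field_simp; ring
    have hfl : f (1 - δ) ≠ ⊤ := by
      have := hfin (-δ) (by rw [abs_neg, abs_of_pos hδ0])
      simpa [sub_eq_add_neg] using this
    have hfr : f (1 + h) ≠ ⊤ := hfin h (by rw [abs_of_pos hh0]; linarith)
    have hcv := (hf.convex_real hα0 hα1 hfl hfr).2
    rw [hcomb, hf.toReal_one] at hcv
    have h1α : 1 - α = δ / (h + δ) := by rw [hα]; field_simp; ring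
    rw [hα, h1α] at hcv
    -- multiply through by `(h+δ)/(h·δ)`
    have key : (f (1 + h)).toReal / h + (f (1 - δ)).toReal / δ
        = (h / (h + δ) * (f (1 - δ)).toReal + δ / (h + δ) * (f (1 + h)).toReal)
          * ((h + δ) / (h * δ)) := by
      field_simp
      ring
    have hpos : 0 ≤ (h + δ) / (h * δ) := by positivity
    rw [hb]
    linarith [key ▸ mul_nonneg hcv hpos]
  have hSbdd : BddBelow S := ⟨b, hSbd⟩
  set c : ℝ := sInf S with hc
  refine ⟨c, fun x => ?_⟩
  rcases lt_trichotomy x 1 with hx1 | rfl | hx1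
  · -- x < 1
    rcases eq_or_ne (f x) ⊤ with hT | hT
    · rw [hT]; exact le_top
    -- key inequality: for every element `s` of `S`, `(x-1) * s ≤ (f x).toReal`
    have key : ∀ s ∈ S, (x - 1) * s ≤ (f x).toReal := by
      rintro s ⟨h, ⟨hh0, hhδ⟩, rfl⟩
      have hden : (0:ℝ) < 1 + h - x := by linarith
      set α : ℝ := h / (1 + h - x) with hα
      have hα0 : 0 ≤ α := div_nonneg hh0.le hden.le
      have hα1 : α ≤ 1 := by rw [div_le_one hden]; linarith
      have hcomb : α * x + (1 - α) * (1 + h) = 1 := by rw [hα]; field_simp; ring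
      have hfr : f (1 + h) ≠ ⊤ := hfin h (by rw [abs_of_pos hh0]; linarith)
      have hcv := (hf.convex_real hα0 hα1 hT hfr).2
      rw [hcomb, hf.toReal_one] at hcv
      have h1α : 1 - α = (1 - x) / (1 + h - x) := by rw [hα]; field_simp; ring
      rw [hα, h1α] at hcv
      -- multiply by `(1+h-x)/h > 0`
      have key2 : (f x).toReal - (x - 1) * ((f (1 + h)).toReal / h)
          = (h / (1 + h - x) * (f x).toReal + (1 - x) / (1 + h - x) * (f (1 + h)).toReal)
            * ((1 + h - x) / h) := by
        field_simp
        ring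
      nlinarith [mul_nonneg hcv (by positivity : (0:ℝ) ≤ (1 + h - x) / h)]
    -- conclude `c * (x-1) ≤ (f x).toReal` by approximating the infimum
    have hreal : c * (x - 1) ≤ (f x).toReal := by
      by_contra hlt
      push_neg at hlt
      set ζ : ℝ := (c * (x - 1) - (f x).toReal) / (1 - x) with hζ
      have hζ0 : 0 < ζ := by
        apply _root_.div_pos (by linarith) (by linarith)
      obtain ⟨s, hsS, hs⟩ := (csInf_lt_iff hSbdd hSne).mp (lt_add_of_pos_right c hζ0)
      have h1 : (x - 1) * (c + ζ) < (x - 1) * s := by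
        apply mul_lt_mul_of_neg_left hs (by linarith)
      have h2 : (x - 1) * s ≤ (f x).toReal := key s hsS
      have : (x - 1) * (c + ζ) = c * (x - 1) - (1 - x) * ζ := by ring
      rw [this] at h1
      have hζval : (1 - x) * ζ = c * (x - 1) - (f x).toReal := by
        rw [hζ, mul_div_cancel₀ _ (by linarith : (1:ℝ) - x ≠ 0)]
      rw [hζval] at h1
      linarith
    calc ((c * (x - 1) : ℝ) : EReal) ≤ (((f x).toReal : ℝ) : EReal) := by
          exact_mod_cast hreal
      _ = f x := EReal.coe_toReal hT (hf.ne_bot x)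
  · simpa using hf.one_eq_zero.symm.le
  · -- 1 < x
    rcases eq_or_ne (f x) ⊤ with hT | hT
    · rw [hT]; exact le_top
    set h : ℝ := min δ (x - 1) / 2 with hh
    have hh0 : 0 < h := by
      have : 0 < min δ (x - 1) := lt_min hδ0 (by linarith)
      positivity
    have hhδ : h < δ := by
      have : min δ (x - 1) ≤ δ := min_le_left _ _
      simp only [hh]; linarith
    have hhx : h < x - 1 := by
      have : min δ (x - 1) ≤ x - 1 := min_le_right _ _
      simp only [hh]; linarith
    set α : ℝ := h / (x - 1) with hα
    have hx1' : (0:ℝ) < x - 1 := by linarith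
    have hα0 : 0 ≤ α := div_nonneg hh0.le hx1'.le
    have hα1 : α ≤ 1 := by rw [div_le_one hx1']; linarith
    have hcomb : α * x + (1 - α) * 1 = 1 + h := by rw [hα]; field_simp; ring
    have hf1 : f 1 ≠ ⊤ := by rw [hf.one_eq_zero]; exact zero_ne_top
    have hcv := (hf.convex_real hα0 hα1 hT hf1).2
    rw [hcomb, hf.toReal_one] at hcv
    have hs : (f (1 + h)).toReal / h ∈ S := ⟨h, ⟨hh0, hhδ⟩, rfl⟩
    have hcs : c ≤ (f (1 + h)).toReal / h := csInf_le hSbdd hs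
    have hreal : c * (x - 1) ≤ (f x).toReal := by
      have : (f (1 + h)).toReal ≤ h / (x - 1) * (f x).toReal := by
        rw [hα] at hcv; linarith
      have h2 : (f (1 + h)).toReal / h ≤ (f x).toReal / (x - 1) := by
        rw [div_le_div_iff₀ hh0 hx1']
        calc (f (1 + h)).toReal * (x - 1) ≤ (h / (x - 1) * (f x).toReal) * (x - 1) := by
              apply mul_le_mul_of_nonneg_right this hx1'.le
          _ = (f x).toReal * h := by field_simp
      have := hcs.trans h2
      calc c * (x - 1) ≤ ((f x).toReal / (x - 1)) * (x - 1) := by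
            apply mul_le_mul_of_nonneg_right this hx1'.le
        _ = (f x).toReal := by field_simp
    calc ((c * (x - 1) : ℝ) : EReal) ≤ (((f x).toReal : ℝ) : EReal) := by exact_mod_cast hreal
      _ = f x := EReal.coe_toReal hT (hf.ne_bot x)

end Subgradient
section FStar

open Filter EReal

variable {f : ℝ → EReal}

/-- If `a (t-1) ≤ f t` for all `t ≥ 2` then `a ≤ f*(0)`. -/
lemma le_fStarZero_of_linear_le {a : ℝ} (h : ∀ t : ℝ, 2 ≤ t → ((a * (t - 1) : ℝ) : EReal) ≤ f t) :
    (a : EReal) ≤ fStarZero f := by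
  have hev : ∀ᶠ t : ℝ in atTop,
      ((a - a * t⁻¹ : ℝ) : EReal) ≤ ((t⁻¹ : ℝ) : EReal) * f t := by
    filter_upwards [eventually_ge_atTop (2:ℝ)] with t ht
    have ht0 : (0:ℝ) < t := by linarith
    have h1 : ((a - a * t⁻¹ : ℝ) : EReal) = ((t⁻¹ : ℝ) : EReal) * ((a * (t - 1) : ℝ) : EReal) := by
      rw [← EReal.coe_mul]
      congr 1
      field_simp
    rw [h1]
    exact mul_le_mul_of_nonneg_left (h t ht) (EReal.coe_nonneg.mpr (by positivity))
  have hlim : Tendsto (fun t : ℝ => ((a - a * t⁻¹ : ℝ) : EReal)) atTop (nhds (a : EReal)) := by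
    rw [EReal.tendsto_coe]
    have : Tendsto (fun t : ℝ => a - a * t⁻¹) atTop (nhds (a - a * 0)) :=
      (tendsto_const_nhds.sub (tendsto_const_nhds.mul tendsto_inv_atTop_zero))
    simpa using this
  calc (a : EReal) = liminf (fun t : ℝ => ((a - a * t⁻¹ : ℝ) : EReal)) atTop := hlim.liminf_eq.symm
    _ ≤ liminf (fun t : ℝ => ((t⁻¹ : ℝ) : EReal) * f t) atTop := liminf_le_liminf hev
    _ ≤ fStarZero f := liminf_le_limsup

lemma fStarZero_ge (hf : MemF f) {c : ℝ} (hc : ∀ x : ℝ, ((c * (x - 1) : ℝ) : EReal) ≤ f x) :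
    (c : EReal) ≤ fStarZero f :=
  le_fStarZero_of_linear_le fun t _ => hc t

/-- If `f` never touches its subtangent line at any `t > 1`, then `c < f*(0)`. -/
lemma fStarZero_gt (hf : MemF f) {c : ℝ} (hc : ∀ x : ℝ, ((c * (x - 1) : ℝ) : EReal) ≤ f x)
    (hno : ∀ t : ℝ, 1 < t → f t ≠ ((c * (t - 1) : ℝ) : EReal)) :
    (c : EReal) < fStarZero f := by
  rcases eq_or_ne (f 2) ⊤ with h2 | h2
  · -- `f = ⊤` on `[2, ∞)`, hence `f*(0) = ⊤`
    have htop : ∀ t : ℝ, 2 ≤ t → f t = ⊤ := by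
      intro t ht
      rcases eq_or_lt_of_le ht with rfl | ht
      · exact h2
      by_contra hT
      have ht1 : (0:ℝ) < t - 1 := by linarith
      set α : ℝ := (t - 2) / (t - 1) with hα
      have hα0 : 0 ≤ α := div_nonneg (by linarith) ht1.le
      have hα1 : α ≤ 1 := by rw [div_le_one ht1]; linarith
      have hcomb : α * 1 + (1 - α) * t = 2 := by rw [hα]; field_simp; ring
      have hf1 : f 1 ≠ ⊤ := by rw [hf.one_eq_zero]; exact zero_ne_top
      have := (hf.convex_real hα0 hα1 hf1 hT).1
      rw [hcomb] at this
      exact this h2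
    have hev : ∀ᶠ t : ℝ in atTop, (⊤ : EReal) ≤ ((t⁻¹ : ℝ) : EReal) * f t := by
      filter_upwards [eventually_ge_atTop (2:ℝ)] with t ht
      rw [htop t ht, EReal.coe_mul_top_of_pos (by positivity : (0:ℝ) < t⁻¹)]
    have : (⊤ : EReal) ≤ fStarZero f := by
      calc (⊤ : EReal) = liminf (fun _ : ℝ => (⊤ : EReal)) atTop := liminf_const ⊤ |>.symm
        _ ≤ liminf (fun t : ℝ => ((t⁻¹ : ℝ) : EReal) * f t) atTop := liminf_le_liminf hev
        _ ≤ fStarZero f := liminf_le_limsup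
    rw [top_le_iff.mp this]
    exact EReal.coe_lt_top c
  · set a : ℝ := (f 2).toReal with ha
    have hf2 : f 2 = (a : EReal) := (EReal.coe_toReal h2 (hf.ne_bot 2)).symm
    have hca : c < a := by
      have h1 := hc 2
      rw [hf2] at h1
      have h1' : c * (2 - 1) ≤ a := by exact_mod_cast h1
      have h2' : f 2 ≠ ((c * (2 - 1) : ℝ) : EReal) := hno 2 (by norm_num)
      rw [hf2] at h2'
      have : c * (2 - 1) ≠ a := fun hh => h2' (by exact_mod_cast hh.symm)
      rcases lt_or_eq_of_le h1' with h | h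
      · linarith
      · exact absurd h this
    have hall : ∀ t : ℝ, 2 ≤ t → ((a * (t - 1) : ℝ) : EReal) ≤ f t := by
      intro t ht
      rcases eq_or_lt_of_le ht with rfl | ht2
      · rw [hf2]; norm_num
      rcases eq_or_ne (f t) ⊤ with hT | hT
      · rw [hT]; exact le_top
      have ht1 : (0:ℝ) < t - 1 := by linarith
      set α : ℝ := (t - 2) / (t - 1) with hα
      have hα0 : 0 ≤ α := div_nonneg (by linarith) ht1.le
      have hα1 : α ≤ 1 := by rw [div_le_one ht1]; linarith
      have hcomb : α * 1 + (1 - α) * t = 2 := by rw [hα]; field_simp; ring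
      have hf1 : f 1 ≠ ⊤ := by rw [hf.one_eq_zero]; exact zero_ne_top
      have hcv := (hf.convex_real hα0 hα1 hf1 hT).2
      rw [hcomb, hf.toReal_one] at hcv
      have h1α : 1 - α = 1 / (t - 1) := by rw [hα]; field_simp; ring
      rw [h1α] at hcv
      have : a * (t - 1) ≤ (f t).toReal := by
        have := mul_le_mul_of_nonneg_right hcv ht1.le
        have heq : (α * 0 + 1 / (t - 1) * (f t).toReal) * (t - 1) = (f t).toReal := by
          field_simp; ring
        rw [heq] at this
        calc a * (t - 1) = a * (t - 1) := rfl
          _ ≤ (f t).toReal := by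
              have ha2 : a = a * (2 - 1) := by ring
              nlinarith [this]
      calc ((a * (t - 1) : ℝ) : EReal) ≤ (((f t).toReal : ℝ) : EReal) := by exact_mod_cast this
        _ = f t := EReal.coe_toReal hT (hf.ne_bot t)
    calc (c : EReal) < (a : EReal) := by exact_mod_cast hca
      _ ≤ fStarZero f := le_fStarZero_of_linear_le hall

/-- Strict convexity at `1` forbids the subtangent to touch `f` on both sides of `1`. -/
lemma strictConvexAt_no_both (hs : StrictConvexAt f 1) (hf1 : f 1 = 0) {c x y : ℝ}
    (hx : x < 1) (hy : 1 < y)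
    (hfx : f x = ((c * (x - 1) : ℝ) : EReal)) (hfy : f y = ((c * (y - 1) : ℝ) : EReal)) :
    False := by
  set α : ℝ := (y - 1) / (y - x) with hα
  have hyx : (0:ℝ) < y - x := by linarith
  have hα0 : 0 < α := div_pos (by linarith) hyx
  have hα1 : α < 1 := by rw [div_lt_one hyx]; linarith
  have hcomb : (1:ℝ) = α * x + (1 - α) * y := by rw [hα]; field_simp; ring
  have := hs x y α (by linarith) (by linarith) hα0 hα1 hcomb
  rw [hf1, hfx, hfy] at this
  have heq : (α : EReal) * ((c * (x - 1) : ℝ) : EReal)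
      + ((1 - α : ℝ) : EReal) * ((c * (y - 1) : ℝ) : EReal)
      = ((α * (c * (x - 1)) + (1 - α) * (c * (y - 1)) : ℝ) : EReal) := by
    push_cast
    ring
  rw [heq] at this
  have hval : α * (c * (x - 1)) + (1 - α) * (c * (y - 1)) = 0 := by
    have h' : α * x + (1 - α) * y = 1 := hcomb.symm
    linear_combination c * h'
  rw [hval] at this
  exact lt_irrefl _ (by exact_mod_cast this)

end FStar
section MeasureAux

open MeasureTheory

variable {γ : Type*} [MeasurableSpace γ]

lemma rnRatio_measurable (P Q : Measure γ) : Measurable (rnRatio P Q) :=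
  (Measure.measurable_rnDeriv _ _).div (Measure.measurable_rnDeriv _ _)

lemma absCont_left (P Q : Measure γ) : P ≪ P + Q :=
  Measure.absolutelyContinuous_of_le (Measure.le_add_right le_rfl)

lemma absCont_right (P Q : Measure γ) : Q ≪ P + Q :=
  Measure.absolutelyContinuous_of_le (Measure.le_add_left le_rfl)

variable (P Q : Measure γ) [IsProbabilityMeasure P] [IsProbabilityMeasure Q]

/-- Integrating a function against `Q` equals integrating against the density `q` w.r.t. `P+Q`. -/
lemma lintegral_Q_eq (g : γ → ℝ≥0∞) (hg : Measurable g) :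
    ∫⁻ ω, g ω ∂Q = ∫⁻ ω, Q.rnDeriv (P + Q) ω * g ω ∂(P + Q) := by
  conv_lhs => rw [← Measure.withDensity_rnDeriv_eq Q (P + Q) (absCont_right P Q)]
  rw [lintegral_withDensity_eq_lintegral_mul _ (Measure.measurable_rnDeriv _ _) hg]
  rfl

/-- The total integral of the ratio `dP/dQ` against `Q`. -/
lemma lintegral_rnRatio :
    ∫⁻ ω, rnRatio P Q ω ∂Q = P {ω | Q.rnDeriv (P + Q) ω ≠ 0} := by
  rw [lintegral_Q_eq P Q _ (rnRatio_measurable P Q)]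
  have hql : ∀ᵐ ω ∂(P + Q), Q.rnDeriv (P + Q) ω < ⊤ := Measure.rnDeriv_lt_top Q (P + Q)
  have hcongr : (fun ω => Q.rnDeriv (P + Q) ω * rnRatio P Q ω)
      =ᵐ[P + Q] {ω | Q.rnDeriv (P + Q) ω ≠ 0}.indicator (P.rnDeriv (P + Q)) := by
    filter_upwards [hql] with ω hω
    by_cases h0 : Q.rnDeriv (P + Q) ω = 0
    · simp [h0, Set.indicator, rnRatio]
    · simp only [Set.indicator, Set.mem_setOf_eq, rnRatio]
      rw [if_pos h0, mul_comm]
      exact ENNReal.div_mul_cancel h0 hω.ne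
  have hms : MeasurableSet {ω | Q.rnDeriv (P + Q) ω ≠ 0} :=
    ((Measure.measurable_rnDeriv Q (P + Q)) (measurableSet_singleton 0)).compl
  rw [lintegral_congr_ae hcongr, lintegral_indicator hms]
  exact Measure.setLIntegral_rnDeriv (absCont_left P Q) _

/-- Under `P`, the set where the ratio is infinite coincides with `{q = 0}`. -/
lemma meas_rnRatio_top :
    P {ω | rnRatio P Q ω = ⊤} = P {ω | Q.rnDeriv (P + Q) ω = 0} := by
  apply measure_congr
  apply Filter.eventuallyEq_set.mpr
  have h1 : ∀ᵐ ω ∂P, 0 < P.rnDeriv (P + Q) ω := Measure.rnDeriv_pos (absCont_left P Q)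
  have h2 : ∀ᵐ ω ∂P, P.rnDeriv (P + Q) ω < ⊤ :=
    (absCont_left P Q).ae_le (Measure.rnDeriv_lt_top P (P + Q))
  filter_upwards [h1, h2] with ω hω1 hω2
  simp only [Set.mem_setOf_eq, rnRatio]
  rw [ENNReal.div_eq_top]
  constructor
  · rintro (⟨-, h⟩ | ⟨h, -⟩)
    · exact h
    · exact absurd h hω2.ne
  · intro h
    exact Or.inl ⟨hω1.ne', h⟩

/-- `Q`-a.e. the ratio is finite. -/
lemma rnRatio_lt_top : ∀ᵐ ω ∂Q, rnRatio P Q ω < ⊤ := by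
  have hq0 : Q {ω | Q.rnDeriv (P + Q) ω = 0} = 0 := by
    have hms : MeasurableSet {ω | Q.rnDeriv (P + Q) ω = 0} :=
      Measure.measurable_rnDeriv Q (P + Q) (measurableSet_singleton 0)
    rw [← Measure.setLIntegral_rnDeriv (absCont_right P Q)]
    rw [setLIntegral_congr_fun hms (fun ω hω => hω)]
    simp
  have hpt : Q {ω | P.rnDeriv (P + Q) ω = ⊤} = 0 := by
    have h := Measure.rnDeriv_ne_top P (P + Q)
    have h' : (P + Q) {ω | P.rnDeriv (P + Q) ω = ⊤} = 0 := by
      rw [ae_iff] at h; simpa using h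
    exact absCont_right P Q h'
  rw [ae_iff]
  refine measure_mono_null ?_ (measure_union_null hq0 hpt)
  intro ω hω
  simp only [Set.mem_setOf_eq, not_lt, top_le_iff, rnRatio] at hω
  rw [ENNReal.div_eq_top] at hω
  rcases hω with ⟨-, h⟩ | ⟨h, -⟩
  · exact Or.inl h
  · exact Or.inr h

/-- `P`-measures of `{q = 0}` and its complement add to one. -/
lemma meas_q_split :
    P {ω | Q.rnDeriv (P + Q) ω = 0} + P {ω | Q.rnDeriv (P + Q) ω ≠ 0} = 1 := by
  have hms : MeasurableSet {ω | Q.rnDeriv (P + Q) ω = 0} :=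
    Measure.measurable_rnDeriv Q (P + Q) (measurableSet_singleton 0)
  rw [show {ω | Q.rnDeriv (P + Q) ω ≠ 0} = {ω | Q.rnDeriv (P + Q) ω = 0}ᶜ from rfl]
  rw [measure_add_measure_compl hms]
  exact measure_univ

end MeasureAux
section Master

open MeasureTheory EReal

/-- Positive-part of a difference, expressed without `EReal` subtraction. -/
def posDiff (x : EReal) (y : ℝ) : ℝ≥0∞ :=
  if x = ⊤ then ⊤ else ENNReal.ofReal (x.toReal - y)

lemma posDiff_eq_zero {x : EReal} {y : ℝ} (h : posDiff x y = 0) :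
    x ≠ ⊤ ∧ x.toReal ≤ y := by
  by_cases hx : x = ⊤
  · simp [posDiff, hx] at h
  · refine ⟨hx, ?_⟩
    simp only [posDiff, hx, if_false, ENNReal.ofReal_eq_zero] at h
    linarith

/-- The key pointwise identity `x⁺ + y⁻ = (x - y)⁺ + x⁻ + y⁺` for `y ≤ x`, `y` real. -/
lemma pos_part_identity {x : EReal} {y : ℝ} (hx : x ≠ ⊥) (h : (y : EReal) ≤ x) :
    x.toENNReal' + ((-y : ℝ) : EReal).toENNReal'
      = posDiff x y + (-x).toENNReal' + ((y : ℝ) : EReal).toENNReal' := by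
  rcases eq_or_ne x ⊤ with rfl | hxt
  · simp [posDiff, toENNReal'_top]
  · set a : ℝ := x.toReal with ha
    have hxa : x = (a : EReal) := (EReal.coe_toReal hxt hx).symm
    have hya : y ≤ a := by
      rw [hxa] at h; exact_mod_cast h
    rw [hxa]
    have hnc : -((a : ℝ) : EReal) = ((-a : ℝ) : EReal) := by norm_cast
    rw [hnc, toENNReal'_coe, toENNReal'_coe, toENNReal'_coe, toENNReal'_coe]
    have hpd : posDiff ((a : ℝ) : EReal) y = ENNReal.ofReal (a - y) := by
      simp only [posDiff, EReal.coe_ne_top, if_false, EReal.toReal_coe]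
    rw [hpd]
    rcases le_or_gt 0 y with hy | hy
    · have ha0 : 0 ≤ a := le_trans hy hya
      rw [ENNReal.ofReal_of_nonpos (by linarith : -y ≤ 0),
        ENNReal.ofReal_of_nonpos (by linarith : -a ≤ 0), add_zero, add_zero,
        ← ENNReal.ofReal_add (by linarith) hy]
      norm_num
    · rcases le_or_gt 0 a with ha0 | ha0
      · rw [ENNReal.ofReal_of_nonpos (by linarith : -a ≤ 0),
          ENNReal.ofReal_of_nonpos hy.le, add_zero, add_zero,
          ← ENNReal.ofReal_add ha0 (by linarith : 0 ≤ -y)]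
        ring_nf
      · rw [ENNReal.ofReal_of_nonpos ha0.le, ENNReal.ofReal_of_nonpos hy.le, add_zero, zero_add,
          ← ENNReal.ofReal_add (by linarith) (by linarith : 0 ≤ -a)]
        ring_nf

lemma measurable_toENNReal' : Measurable EReal.toENNReal' := by
  unfold EReal.toENNReal'
  apply Measurable.ite (measurableSet_singleton ⊤) measurable_const
  exact ENNReal.measurable_ofReal.comp measurable_ereal_toReal

lemma measurable_extF {f : ℝ → EReal} (hf : Measurable f) : Measurable (extF f) := by
  unfold extF
  apply Measurable.ite (measurableSet_singleton ⊤) measurable_const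
  exact hf.comp ENNReal.measurable_toReal

/-- `x * (m : EReal)` is never `⊥` when `x ≠ ⊥` and `m` is a finite `ℝ≥0∞`. -/
lemma mul_coe_ennreal_ne_bot {x : EReal} (hx : x ≠ ⊥) {m : ℝ≥0∞} (hm : m ≠ ⊤) :
    x * (m : EReal) ≠ ⊥ := by
  rcases eq_or_ne x ⊤ with rfl | hxt
  · rcases eq_or_ne m 0 with rfl | hm0
    · simp
    · rw [EReal.top_mul_of_pos (by exact_mod_cast pos_iff_ne_zero.mpr hm0 : (0:EReal) < m)]
      simp
  · rw [ennreal_coe_ereal_eq hm, ← EReal.coe_toReal hxt hx, ← EReal.coe_mul]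
    exact EReal.coe_ne_bot _

end Master
section MasterLemma

open MeasureTheory EReal

variable {γ : Type*} [MeasurableSpace γ] (P Q : Measure γ)
  [IsProbabilityMeasure P] [IsProbabilityMeasure Q]

lemma fDiv_decomp {f : ℝ → EReal} (hf : MemF f) {c : ℝ}
    (hc : ∀ x : ℝ, ((c * (x - 1) : ℝ) : EReal) ≤ f x)
    (hc' : (c : EReal) ≤ fStarZero f) :
    0 ≤ fDiv f P Q ∧
    (fDiv f P Q = 0 →
      (∀ᵐ ω ∂Q, extF f (rnRatio P Q ω) = ((c * ((rnRatio P Q ω).toReal - 1) : ℝ) : EReal)) ∧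
      (fStarZero f = (c : EReal) ∨ P {ω | rnRatio P Q ω = ⊤} = 0)) := by
  have hfm : Measurable f := hf.measurable
  set r : γ → ℝ≥0∞ := rnRatio P Q with hr
  have hrm : Measurable r := rnRatio_measurable P Q
  set F : γ → EReal := fun ω => extF f (r ω) with hF
  have hFm : Measurable F := (measurable_extF hfm).comp hrm
  set ℓ : γ → ℝ := fun ω => c * ((r ω).toReal - 1) with hℓ
  have hℓm : Measurable ℓ :=
    measurable_const.mul ((ENNReal.measurable_toReal.comp hrm).sub measurable_const)
  have hne_bot : ∀ ω, F ω ≠ ⊥ := by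
    intro ω
    by_cases h : r ω = ⊤ <;> simp [hF, extF, h, hf.ne_bot]
  have hle : ∀ ω, ((ℓ ω : ℝ) : EReal) ≤ F ω := by
    intro ω
    by_cases h : r ω = ⊤
    · simp [hF, extF, h]
    · simpa [hF, extF, h, hℓ] using hc ((r ω).toReal)
  set G : γ → ℝ≥0∞ := fun ω => posDiff (F ω) (ℓ ω) with hGdef
  have hGm : Measurable G := by
    simp only [hGdef, posDiff]
    exact Measurable.ite (hFm (measurableSet_singleton ⊤)) measurable_const
      (ENNReal.measurable_ofReal.comp (hFm.ereal_toReal.sub hℓm))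
  set A := ∫⁻ ω, (F ω).toENNReal' ∂Q with hA
  set B := ∫⁻ ω, (-(F ω)).toENNReal' ∂Q with hB
  set GG := ∫⁻ ω, G ω ∂Q with hGG
  set Lp := ∫⁻ ω, ENNReal.ofReal (ℓ ω) ∂Q with hLp
  set Lm := ∫⁻ ω, ENNReal.ofReal (-ℓ ω) ∂Q with hLm
  set mset := P {ω | r ω = ⊤} with hmset
  -- the pointwise identity, integrated
  have hsplit : A + Lm = GG + B + Lp := by
    have h1 : A + Lm = ∫⁻ ω, ((F ω).toENNReal' + ENNReal.ofReal (-ℓ ω)) ∂Q :=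
      (lintegral_add_right _ (show Measurable fun ω => ENNReal.ofReal (-ℓ ω) from ENNReal.measurable_ofReal.comp hℓm.neg)).symm
    have h2 : ∫⁻ ω, (G ω + (-(F ω)).toENNReal' + ENNReal.ofReal (ℓ ω)) ∂Q = GG + B + Lp := by
      rw [lintegral_add_right _ (show Measurable fun ω => ENNReal.ofReal (ℓ ω) from
          ENNReal.measurable_ofReal.comp hℓm),
        lintegral_add_right _ (show Measurable fun ω => (-(F ω)).toENNReal' from
          measurable_toENNReal'.comp hFm.neg)]
    rw [h1, ← h2]
    apply lintegral_congr
    intro ω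
    have := pos_part_identity (hne_bot ω) (hle ω)
    rwa [toENNReal'_coe, toENNReal'_coe] at this
  -- finiteness of the affine part
  have hIle : ∫⁻ ω, r ω ∂Q ≤ 1 := by
    rw [lintegral_rnRatio P Q]
    exact prob_le_one
  have hLbound : ∀ ω, ENNReal.ofReal |ℓ ω| ≤ ENNReal.ofReal |c| * (r ω + 1) := by
    intro ω
    have ht0 : 0 ≤ (r ω).toReal := ENNReal.toReal_nonneg
    calc ENNReal.ofReal |ℓ ω| ≤ ENNReal.ofReal (|c| * ((r ω).toReal + 1)) := by
          apply ENNReal.ofReal_le_ofReal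
          rw [hℓ]
          calc |c * ((r ω).toReal - 1)| = |c| * |(r ω).toReal - 1| := abs_mul _ _
            _ ≤ |c| * ((r ω).toReal + 1) := by
                apply mul_le_mul_of_nonneg_left _ (abs_nonneg c)
                exact abs_le.mpr ⟨by linarith, by linarith⟩
      _ = ENNReal.ofReal |c| * ENNReal.ofReal ((r ω).toReal + 1) :=
          ENNReal.ofReal_mul (abs_nonneg c)
      _ ≤ ENNReal.ofReal |c| * (r ω + 1) := by
          apply mul_le_mul_right
          rw [ENNReal.ofReal_add ht0 zero_le_one]
          simp only [ENNReal.ofReal_one]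
          exact add_le_add ENNReal.ofReal_toReal_le le_rfl
  have habs_fin : ∫⁻ ω, ENNReal.ofReal |ℓ ω| ∂Q < ⊤ := by
    calc ∫⁻ ω, ENNReal.ofReal |ℓ ω| ∂Q ≤ ∫⁻ ω, ENNReal.ofReal |c| * (r ω + 1) ∂Q :=
          lintegral_mono hLbound
      _ = ENNReal.ofReal |c| * ((∫⁻ ω, r ω ∂Q) + 1) := by
          rw [lintegral_const_mul (f := fun ω => r ω + 1) _ (hrm.add measurable_const),
            lintegral_add_right _ measurable_const]
          simp [lintegral_const]
      _ < ⊤ := by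
          apply ENNReal.mul_lt_top ENNReal.ofReal_lt_top
          exact lt_of_le_of_lt (add_le_add hIle le_rfl) (by norm_num)
  have hLpfin : Lp ≠ ⊤ := by
    refine (lt_of_le_of_lt (lintegral_mono fun ω => ?_) habs_fin).ne
    exact ENNReal.ofReal_le_ofReal (le_abs_self _)
  have hLmfin : Lm ≠ ⊤ := by
    refine (lt_of_le_of_lt (lintegral_mono fun ω => ?_) habs_fin).ne
    exact ENNReal.ofReal_le_ofReal (neg_le_abs _)
  have hBLm : B ≤ Lm := by
    apply lintegral_mono
    intro ω
    have h1 : -(F ω) ≤ ((-ℓ ω : ℝ) : EReal) := by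
      rw [show ((-ℓ ω : ℝ) : EReal) = -((ℓ ω : ℝ) : EReal) by norm_cast]
      exact EReal.neg_le_neg_iff.mpr (hle ω)
    calc (-(F ω)).toENNReal' ≤ ((-ℓ ω : ℝ) : EReal).toENNReal' := toENNReal'_mono h1
      _ = ENNReal.ofReal (-ℓ ω) := toENNReal'_coe _
  have hBfin : B ≠ ⊤ := (lt_of_le_of_lt hBLm hLmfin.lt_top).ne
  have hfs_ne_bot : fStarZero f ≠ ⊥ := by
    intro h
    rw [h, le_bot_iff] at hc'
    exact EReal.coe_ne_bot c hc'
  have hmfin : mset ≠ ⊤ := measure_ne_top P _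
  have hfDiv : fDiv f P Q = ((A : EReal) - (B : EReal)) + fStarZero f * (mset : EReal) := rfl
  rcases eq_or_ne A ⊤ with hAtop | hAfin
  · -- infinite case : `fDiv = ⊤`
    have htop : fDiv f P Q = ⊤ := by
      rw [hfDiv, hAtop, EReal.coe_ennreal_top, ennreal_coe_ereal_eq hBfin, EReal.top_sub_coe,
        EReal.top_add_of_ne_bot (mul_coe_ennreal_ne_bot hfs_ne_bot hmfin)]
    rw [htop]
    exact ⟨le_top, fun h0 => absurd h0 top_ne_zero⟩
  · -- finite case
    have hLHSfin : A + Lm ≠ ⊤ := by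
      rw [ENNReal.add_ne_top]; exact ⟨hAfin, hLmfin⟩
    have hGGfin : GG ≠ ⊤ := by
      intro h
      apply hLHSfin
      rw [hsplit, h, top_add, top_add]
    -- convert to real arithmetic
    set a := A.toReal with ha
    set b := B.toReal with hb2
    set gg := GG.toReal with hgg
    set lp := Lp.toReal with hlp
    set lm := Lm.toReal with hlm
    set m := mset.toReal with hm
    have hreal : a + lm = gg + b + lp := by
      have := congrArg ENNReal.toReal hsplit
      rwa [ENNReal.toReal_add hAfin hLmfin, ENNReal.toReal_add, ENNReal.toReal_add hGGfin hBfin]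
        at this
      · rw [ENNReal.add_ne_top]; exact ⟨hGGfin, hBfin⟩
      · exact hLpfin
    -- the integral of `ℓ`
    have hrlt : ∀ᵐ ω ∂Q, r ω < ⊤ := rnRatio_lt_top P Q
    have hIfin : ∫⁻ ω, r ω ∂Q ≠ ⊤ := (lt_of_le_of_lt hIle (by norm_num)).ne
    have hrint : Integrable (fun ω => (r ω).toReal) Q :=
      integrable_toReal_of_lintegral_ne_top hrm.aemeasurable hIfin
    have hℓint : Integrable ℓ Q := by
      have := (hrint.sub (integrable_const (1:ℝ))).const_mul c
      simpa [hℓ] using this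
    have hLeq : lp - lm = ∫ ω, ℓ ω ∂Q :=
      (integral_eq_lintegral_pos_part_sub_lintegral_neg_part hℓint).symm
    set i := (∫⁻ ω, r ω ∂Q).toReal with hi
    have hLval : ∫ ω, ℓ ω ∂Q = c * (i - 1) := by
      rw [hℓ]
      rw [integral_const_mul]
      rw [integral_sub hrint (integrable_const (1:ℝ)), integral_const]
      rw [integral_toReal hrm.aemeasurable hrlt]
      simp [measure_univ, hi]
    have him : i + m = 1 := by
      have h2 : mset = P {ω | Q.rnDeriv (P + Q) ω = 0} := meas_rnRatio_top P Q
      have h3 := meas_q_split P Q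
      have : mset + P {ω | Q.rnDeriv (P + Q) ω ≠ 0} = 1 := by rw [h2]; exact h3
      have h4 : (∫⁻ ω, r ω ∂Q) = P {ω | Q.rnDeriv (P + Q) ω ≠ 0} := lintegral_rnRatio P Q
      have h5 := congrArg ENNReal.toReal this
      rw [ENNReal.toReal_add hmfin (measure_ne_top P _)] at h5
      rw [hi, h4, hm]
      rw [ENNReal.toReal_one] at h5
      linarith
    have hab : a - b = gg - c * m := by
      have : lp - lm = c * (i - 1) := by rw [hLeq, hLval]
      have hi1 : i - 1 = -m := by linarith
      rw [hi1] at this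
      linarith
    have heInt : ((A : EReal) - (B : EReal)) = ((a - b : ℝ) : EReal) := by
      rw [ennreal_coe_ereal_eq hAfin, ennreal_coe_ereal_eq hBfin]
      norm_cast
    have hggnn : 0 ≤ gg := ENNReal.toReal_nonneg
    -- the conclusion about `G` when `GG = 0`
    have hGconc : gg = 0 →
        ∀ᵐ ω ∂Q, extF f (rnRatio P Q ω)
          = ((c * ((rnRatio P Q ω).toReal - 1) : ℝ) : EReal) := by
      intro hgg0
      have hGG0 : GG = 0 := by
        rcases (ENNReal.toReal_eq_zero_iff GG).mp hgg0 with h | h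
        · exact h
        · exact absurd h hGGfin
      have hGae : ∀ᵐ ω ∂Q, G ω = 0 := (lintegral_eq_zero_iff hGm).mp hGG0
      filter_upwards [hGae] with ω hω
      obtain ⟨hnt, hle'⟩ := posDiff_eq_zero hω
      have hfx : F ω = ((F ω).toReal : EReal) := (EReal.coe_toReal hnt (hne_bot ω)).symm
      have h1 : ℓ ω ≤ (F ω).toReal := by
        have := hle ω
        rw [hfx] at this
        exact_mod_cast this
      have h2 : (F ω).toReal = ℓ ω := le_antisymm hle' h1
      show F ω = ((ℓ ω : ℝ) : EReal)
      rw [hfx, h2]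
    rcases eq_or_ne mset 0 with hm0 | hm0
    · -- `m = 0`
      have hmm : m = 0 := by rw [hm, hm0]; simp
      have hval : fDiv f P Q = ((gg : ℝ) : EReal) := by
        rw [hfDiv, heInt, hm0, EReal.coe_ennreal_zero, mul_zero, add_zero, hab, hmm]
        norm_num
      constructor
      · rw [hval]; exact_mod_cast hggnn
      · intro h0
        rw [hval] at h0
        have hgg0 : gg = 0 := by exact_mod_cast h0
        exact ⟨hGconc hgg0, Or.inr hm0⟩
    · rcases eq_or_ne (fStarZero f) ⊤ with hstop | hsne
      · have htop : fDiv f P Q = ⊤ := by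
          rw [hfDiv, heInt, hstop,
            EReal.top_mul_of_pos (EReal.coe_ennreal_pos.mpr (pos_iff_ne_zero.mpr hm0)),
            EReal.coe_add_top]
        rw [htop]
        exact ⟨le_top, fun h0 => absurd h0 top_ne_zero⟩
      · set s := (fStarZero f).toReal with hs
        have hfs : fStarZero f = (s : EReal) := (EReal.coe_toReal hsne hfs_ne_bot).symm
        have hcs : c ≤ s := by
          rw [hfs] at hc'; exact_mod_cast hc'
        have hmul : fStarZero f * (mset : EReal) = ((s * m : ℝ) : EReal) := by
          rw [hfs, ennreal_coe_ereal_eq hmfin, ← EReal.coe_mul]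
        have hval : fDiv f P Q = ((gg + (s - c) * m : ℝ) : EReal) := by
          rw [hfDiv, heInt, hmul, ← EReal.coe_add]
          congr 1
          rw [hab]; ring
        have hm0' : 0 < m := ENNReal.toReal_pos hm0 hmfin
        constructor
        · rw [hval]
          have : (0:ℝ) ≤ gg + (s - c) * m := by nlinarith
          exact_mod_cast this
        · intro h0
          rw [hval] at h0
          have hr0 : gg + (s - c) * m = 0 := by exact_mod_cast h0
          have hgg0 : gg = 0 := by nlinarith
          have hsc : s = c := by nlinarith
          exact ⟨hGconc hgg0, Or.inl (by rw [hfs, hsc])⟩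

end MasterLemma
section Conclusions

open MeasureTheory EReal

variable {γ : Type*} [MeasurableSpace γ] (P Q : Measure γ)
  [IsProbabilityMeasure P] [IsProbabilityMeasure Q]

/-- If `f` is strictly convex at `1` and the divergence vanishes, the measures coincide. -/
lemma eq_of_fDiv_eq_zero {f : ℝ → EReal} (hf : MemF f) (hs : StrictConvexAt f 1)
    (hzero : fDiv f P Q = 0) : P = Q := by
  obtain ⟨c, hc⟩ := hf.exists_subgradient
  have hc' : (c : EReal) ≤ fStarZero f := fStarZero_ge hf hc
  obtain ⟨hae, hdisj⟩ := (fDiv_decomp P Q hf hc hc').2 hzero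
  have hrm : Measurable (rnRatio P Q) := rnRatio_measurable P Q
  have hrlt : ∀ᵐ ω ∂Q, rnRatio P Q ω < ⊤ := rnRatio_lt_top P Q
  -- a.e. the real value of the ratio lies in the "touching set"
  have htouch : ∀ᵐ ω ∂Q, f ((rnRatio P Q ω).toReal)
      = ((c * ((rnRatio P Q ω).toReal - 1) : ℝ) : EReal) ∧ rnRatio P Q ω ≠ ⊤ := by
    filter_upwards [hae, hrlt] with ω h1 h2
    refine ⟨?_, h2.ne⟩
    rw [← h1]
    simp [extF, h2.ne]
  have hI : ∫⁻ ω, rnRatio P Q ω ∂Q = P {ω | Q.rnDeriv (P + Q) ω ≠ 0} := lintegral_rnRatio P Q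
  have hIle : ∫⁻ ω, rnRatio P Q ω ∂Q ≤ 1 := by rw [hI]; exact prob_le_one
  -- main dichotomy: the touching set is on one side of 1
  have hkey : (∀ᵐ ω ∂Q, rnRatio P Q ω = 1) ∧ P {ω | Q.rnDeriv (P + Q) ω = 0} = 0 := by
    by_cases hcase : ∀ t : ℝ, 1 < t → f t ≠ ((c * (t - 1) : ℝ) : EReal)
    · -- no touching on the right: ratio ≤ 1 a.e.
      have hr1 : ∀ᵐ ω ∂Q, rnRatio P Q ω ≤ 1 := by
        filter_upwards [htouch] with ω ⟨h1, h2⟩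
        by_contra hgt
        push_neg at hgt
        have ht1 : 1 < (rnRatio P Q ω).toReal := by
          rw [← ENNReal.toReal_one]
          exact (ENNReal.toReal_lt_toReal ENNReal.one_ne_top h2).mpr hgt
        exact hcase _ ht1 h1
      -- the infinity set is `P`-null
      have hm0 : P {ω | rnRatio P Q ω = ⊤} = 0 := by
        rcases hdisj with h | h
        · exact absurd h (fStarZero_gt hf hc hcase).ne'
        · exact h
      have hq0 : P {ω | Q.rnDeriv (P + Q) ω = 0} = 0 := by
        rw [← meas_rnRatio_top P Q]; exact hm0
      have hI1 : ∫⁻ ω, rnRatio P Q ω ∂Q = 1 := by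
        rw [hI]
        have := meas_q_split P Q
        rw [hq0, zero_add] at this
        exact this
      -- `r ≤ 1` with total integral 1 forces `r = 1` a.e.
      have hsub : ∫⁻ ω, (1 - rnRatio P Q ω) ∂Q = 0 := by
        rw [lintegral_sub hrm (hI1 ▸ ENNReal.one_ne_top) hr1, hI1, lintegral_one, measure_univ,
          tsub_self]
      have hz : ∀ᵐ ω ∂Q, 1 - rnRatio P Q ω = 0 :=
        (lintegral_eq_zero_iff (measurable_const.sub hrm)).mp hsub
      refine ⟨?_, hq0⟩
      filter_upwards [hz, hr1] with ω h1 h2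
      exact le_antisymm h2 (tsub_eq_zero_iff_le.mp h1)
    · -- touching at some `t₀ > 1`: then no touching on the left, ratio ≥ 1 a.e.
      push_neg at hcase
      obtain ⟨t₀, ht₀, htt⟩ := hcase
      have hleft : ∀ x : ℝ, x < 1 → f x ≠ ((c * (x - 1) : ℝ) : EReal) := by
        intro x hx hfx
        exact strictConvexAt_no_both hs hf.one_eq_zero hx ht₀ hfx htt
      have hr1 : ∀ᵐ ω ∂Q, 1 ≤ rnRatio P Q ω := by
        filter_upwards [htouch] with ω ⟨h1, h2⟩
        by_contra hlt
        push_neg at hlt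
        have ht1 : (rnRatio P Q ω).toReal < 1 := by
          rw [← ENNReal.toReal_one]
          exact (ENNReal.toReal_lt_toReal h2 ENNReal.one_ne_top).mpr hlt
        exact hleft _ ht1 h1
      have hI1 : ∫⁻ ω, rnRatio P Q ω ∂Q = 1 := by
        refine le_antisymm hIle ?_
        calc (1:ℝ≥0∞) = ∫⁻ _, 1 ∂Q := by simp
          _ ≤ ∫⁻ ω, rnRatio P Q ω ∂Q := lintegral_mono_ae hr1
      have hq0 : P {ω | Q.rnDeriv (P + Q) ω = 0} = 0 := by
        have h3 := meas_q_split P Q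
        rw [← hI, hI1] at h3
        have h4 : P {ω | Q.rnDeriv (P + Q) ω = 0} + 1 = 0 + 1 := by rw [zero_add]; exact h3
        exact (ENNReal.add_left_inj ENNReal.one_ne_top).mp h4
      have hsub : ∫⁻ ω, (rnRatio P Q ω - 1) ∂Q = 0 := by
        rw [lintegral_sub measurable_const (by simp) hr1, lintegral_one, measure_univ, hI1,
          tsub_self]
      have hz : ∀ᵐ ω ∂Q, rnRatio P Q ω - 1 = 0 :=
        (lintegral_eq_zero_iff (hrm.sub measurable_const)).mp hsub
      refine ⟨?_, hq0⟩
      filter_upwards [hz, hr1] with ω h1 h2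
      exact le_antisymm (tsub_eq_zero_iff_le.mp h1) h2
  obtain ⟨hr1, hq0⟩ := hkey
  -- transfer to statements about the densities
  have hqm : Measurable (Q.rnDeriv (P + Q)) := Measure.measurable_rnDeriv _ _
  have hpm : Measurable (P.rnDeriv (P + Q)) := Measure.measurable_rnDeriv _ _
  have hqlt : ∀ᵐ ω ∂(P + Q), Q.rnDeriv (P + Q) ω < ⊤ := Measure.rnDeriv_lt_top Q (P + Q)
  have h1 : ∀ᵐ ω ∂(P + Q), Q.rnDeriv (P + Q) ω ≠ 0 → rnRatio P Q ω = 1 := by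
    have h0 : Q {ω | rnRatio P Q ω ≠ 1} = 0 := by
      rw [ae_iff] at hr1; exact hr1
    have h0' : (P + Q).withDensity (Q.rnDeriv (P + Q)) {ω | rnRatio P Q ω ≠ 1} = 0 := by
      rw [Measure.withDensity_rnDeriv_eq Q (P + Q) (absCont_right P Q)]
      exact h0
    rw [withDensity_apply_eq_zero hqm] at h0'
    rw [ae_iff]
    refine measure_mono_null ?_ h0'
    intro ω hω
    simp only [Set.mem_setOf_eq, Classical.not_imp] at hω
    exact ⟨hω.1, hω.2⟩
  have h2 : ∀ᵐ ω ∂(P + Q), Q.rnDeriv (P + Q) ω = 0 → P.rnDeriv (P + Q) ω = 0 := by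
    have hms : MeasurableSet {ω | Q.rnDeriv (P + Q) ω = 0} :=
      hqm (measurableSet_singleton 0)
    have : ∫⁻ ω in {ω | Q.rnDeriv (P + Q) ω = 0}, P.rnDeriv (P + Q) ω ∂(P + Q) = 0 := by
      rw [Measure.setLIntegral_rnDeriv (absCont_left P Q)]
      exact hq0
    have h4 := (setLIntegral_eq_zero_iff hms hpm).mp this
    filter_upwards [h4] with ω hω
    exact hω
  have hpq : P.rnDeriv (P + Q) =ᵐ[P + Q] Q.rnDeriv (P + Q) := by
    filter_upwards [h1, h2, hqlt] with ω hω1 hω2 hω3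
    rcases eq_or_ne (Q.rnDeriv (P + Q) ω) 0 with h0 | h0
    · rw [h0, hω2 h0]
    · have := hω1 h0
      simp only [rnRatio] at this
      rwa [ENNReal.div_eq_one_iff h0 hω3.ne] at this
  calc P = (P + Q).withDensity (P.rnDeriv (P + Q)) :=
        (Measure.withDensity_rnDeriv_eq P (P + Q) (absCont_left P Q)).symm
    _ = (P + Q).withDensity (Q.rnDeriv (P + Q)) := withDensity_congr_ae hpq
    _ = Q := Measure.withDensity_rnDeriv_eq Q (P + Q) (absCont_right P Q)

/-- The divergence of a probability measure from itself vanishes. -/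
lemma fDiv_self (f : ℝ → EReal) (hf : MemF f) : fDiv f Q Q = 0 := by
  have hq0 : Q {ω | Q.rnDeriv (Q + Q) ω = 0} = 0 := by
    have hms : MeasurableSet {ω | Q.rnDeriv (Q + Q) ω = 0} :=
      Measure.measurable_rnDeriv Q (Q + Q) (measurableSet_singleton 0)
    rw [← Measure.setLIntegral_rnDeriv (absCont_right Q Q),
      setLIntegral_congr_fun hms (fun ω hω => hω)]
    simp
  have hqlt : ∀ᵐ ω ∂Q, Q.rnDeriv (Q + Q) ω < ⊤ :=
    (absCont_right Q Q).ae_le (Measure.rnDeriv_lt_top Q (Q + Q))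
  have hr1 : ∀ᵐ ω ∂Q, rnRatio Q Q ω = 1 := by
    have hne : ∀ᵐ ω ∂Q, Q.rnDeriv (Q + Q) ω ≠ 0 := by
      rw [ae_iff]
      simpa using hq0
    filter_upwards [hne, hqlt] with ω h1 h2
    simp only [rnRatio]
    exact ENNReal.div_self h1 h2.ne
  have hm0 : Q {ω | rnRatio Q Q ω = ⊤} = 0 := by
    rw [ae_iff] at hr1
    refine measure_mono_null ?_ hr1
    intro ω hω
    simp only [Set.mem_setOf_eq] at *
    rw [hω]
    simp
  have heInt : eInt Q (fun ω => extF f (rnRatio Q Q ω)) = 0 := by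
    have hz : ∀ᵐ ω ∂Q, extF f (rnRatio Q Q ω) = 0 := by
      filter_upwards [hr1] with ω hω
      rw [hω]
      simp only [extF]
      rw [if_neg (by simp : (1:ℝ≥0∞) ≠ ⊤)]
      simpa using hf.one_eq_zero
    have hpos : ∫⁻ ω, (extF f (rnRatio Q Q ω)).toENNReal' ∂Q = 0 := by
      rw [lintegral_congr_ae (hz.mono fun ω h => by rw [h])]
      simp [toENNReal'_nonpos le_rfl]
    have hneg : ∫⁻ ω, (-(extF f (rnRatio Q Q ω))).toENNReal' ∂Q = 0 := by
      rw [lintegral_congr_ae (hz.mono fun ω h => by rw [h])]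
      simp [toENNReal'_nonpos le_rfl]
    rw [eInt, hpos, hneg]
    simp
  rw [fDiv, heInt, hm0]
  simp

end Conclusions
section MapEquiv

open MeasureTheory EReal

/-- `fDiv` is invariant under pushing both measures forward by a measurable equivalence. -/
lemma fDiv_map_equiv {γ δ : Type*} [MeasurableSpace γ] [MeasurableSpace δ] (e : γ ≃ᵐ δ)
    (f : ℝ → EReal) (P Q : Measure γ) [IsFiniteMeasure P] [IsFiniteMeasure Q] :
    fDiv f (P.map e) (Q.map e) = fDiv f P Q := by
  have he := e.measurableEmbedding
  have hsum : P.map e + Q.map e = (P + Q).map e := (Measure.map_add P Q e.measurable).symm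
  have hP := he.rnDeriv_map P (P + Q)
  have hQ := he.rnDeriv_map Q (P + Q)
  have hr : (fun x => rnRatio (P.map e) (Q.map e) (e x)) =ᵐ[P + Q] rnRatio P Q := by
    filter_upwards [hP, hQ] with x h1 h2
    simp only [rnRatio, hsum]
    rw [h1, h2]
  have hrm' : Measurable (rnRatio (P.map e) (Q.map e)) := rnRatio_measurable _ _
  have hrQ : (fun x => rnRatio (P.map e) (Q.map e) (e x)) =ᵐ[Q] rnRatio P Q :=
    (absCont_right P Q).ae_le hr
  have hrP : (fun x => rnRatio (P.map e) (Q.map e) (e x)) =ᵐ[P] rnRatio P Q :=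
    (absCont_left P Q).ae_le hr
  have heInt : eInt (Q.map e) (fun ω => extF f (rnRatio (P.map e) (Q.map e) ω))
      = eInt Q (fun ω => extF f (rnRatio P Q ω)) := by
    unfold eInt
    congr 2
    · rw [lintegral_map_equiv _ e]
      apply lintegral_congr_ae
      filter_upwards [hrQ] with ω hω
      rw [show rnRatio (P.map e) (Q.map e) (e ω) = rnRatio P Q ω from hω]
    · rw [lintegral_map_equiv _ e]
      apply lintegral_congr_ae
      filter_upwards [hrQ] with ω hω
      rw [show rnRatio (P.map e) (Q.map e) (e ω) = rnRatio P Q ω from hω]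
  have hm : (P.map e) {ω | rnRatio (P.map e) (Q.map e) ω = ⊤}
      = P {ω | rnRatio P Q ω = ⊤} := by
    have hset : {ω | rnRatio (P.map e) (Q.map e) ω = ⊤}
        = rnRatio (P.map e) (Q.map e) ⁻¹' {⊤} := rfl
    rw [hset, Measure.map_apply e.measurable (hrm' (measurableSet_singleton ⊤))]
    apply measure_congr
    apply Filter.eventuallyEq_set.mpr
    filter_upwards [hrP] with ω hω
    simp only [Set.mem_preimage, Set.mem_setOf_eq, Set.mem_singleton_iff]
    rw [show rnRatio (P.map e) (Q.map e) (e ω) = rnRatio P Q ω from hω]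
  rw [fDiv, fDiv, heInt, hm]

end MapEquiv

/-- **Properties of the Csiszár index.** For `f ∈ 𝔽` and random variables `X, Y`:
(i) `S_f(X,Y) = S_f(Y,X)`; (ii) `S_f(X,Y) ≥ 0`, with `S_f(X,Y) = 0` when `X ⊥⊥ Y`;
(iii) if `f` is strictly convex at `1`, then `S_f(X,Y) = 0` implies `X ⊥⊥ Y`. -/
theorem csiszarIndex_properties
    {Ω α β : Type*} [MeasurableSpace Ω] [MeasurableSpace α] [MeasurableSpace β]
    (μ : Measure Ω) [IsProbabilityMeasure μ]
    (X : Ω → α) (Y : Ω → β) (hX : Measurable X) (hY : Measurable Y)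
    (f : ℝ → EReal) (hf : MemF f) :
    csiszarIndex f μ X Y = csiszarIndex f μ Y X ∧
    0 ≤ csiszarIndex f μ X Y ∧
    (ProbabilityTheory.IndepFun X Y μ → csiszarIndex f μ X Y = 0) ∧
    (StrictConvexAt f 1 → csiszarIndex f μ X Y = 0 → ProbabilityTheory.IndepFun X Y μ) := by
  have hXY : Measurable fun ω => (X ω, Y ω) := hX.prodMk hY
  have iPX : IsProbabilityMeasure (μ.map X) := Measure.isProbabilityMeasure_map hX.aemeasurable
  have iPY : IsProbabilityMeasure (μ.map Y) := Measure.isProbabilityMeasure_map hY.aemeasurable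
  have iXY : IsProbabilityMeasure (μ.map fun ω => (X ω, Y ω)) :=
    Measure.isProbabilityMeasure_map hXY.aemeasurable
  obtain ⟨c, hc⟩ := hf.exists_subgradient
  have hc' : (c : EReal) ≤ fStarZero f := fStarZero_ge hf hc
  refine ⟨?_, ?_, ?_, ?_⟩
  · -- symmetry
    unfold csiszarIndex
    set e := MeasurableEquiv.prodComm (α := α) (β := β) with hedef
    have hecoe : (⇑e : α × β → β × α) = Prod.swap := rfl
    have h1 : (μ.map Y).prod (μ.map X) = ((μ.map X).prod (μ.map Y)).map e := by
      rw [hecoe]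
      exact Measure.prod_swap.symm
    have h2 : μ.map (fun ω => (Y ω, X ω)) = (μ.map fun ω => (X ω, Y ω)).map e := by
      rw [hecoe, Measure.map_map measurable_swap hXY]
      rfl
    rw [h1, h2, fDiv_map_equiv]
  · exact (fDiv_decomp _ _ hf hc hc').1
  · intro hind
    have hmap := (ProbabilityTheory.indepFun_iff_map_prod_eq_prod_map_map hX.aemeasurable
      hY.aemeasurable).mp hind
    unfold csiszarIndex
    rw [hmap]
    exact fDiv_self _ f hf
  · intro hstrict h0
    rw [ProbabilityTheory.indepFun_iff_map_prod_eq_prod_map_map hX.aemeasurable hY.aemeasurable]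
    exact (eq_of_fDiv_eq_zero _ _ hf hstrict h0).symm
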